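/- For every α > 0 there exist constants c_α > 0 and C_α > 0 such that for all t > 0 and all ξ, η ∈ ℝ³: c_α · t · (1 + |ξ|² + t²|η|²)^{α/2} ≤ ∫₀ᵗ (1 + |ξ + ρη|²)^{α/2} dρ ≤ C_α · t · (1 + |ξ|² + t²|η|²)^{α/2}. -/
import Mathlib


open MeasureTheory

set_option maxHeartbeats 1000000 in
theorem two_sided_symbol_average_estimate (α : ℝ) (hα : 0 < α) :
    ∃ c C : ℝ, 0 < c ∧ 0 < C ∧ ∀ t : ℝ, 0 < t → ∀ ξ η : EuclideanSpace ℝ (Fin 3),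
      c * t * (1 + ‖ξ‖ ^ 2 + t ^ 2 * ‖η‖ ^ 2) ^ (α / 2)
          ≤ (∫ ρ in (0:ℝ)..t, (1 + ‖ξ + ρ • η‖ ^ 2) ^ (α / 2)) ∧
      (∫ ρ in (0:ℝ)..t, (1 + ‖ξ + ρ • η‖ ^ 2) ^ (α / 2))
          ≤ C * t * (1 + ‖ξ‖ ^ 2 + t ^ 2 * ‖η‖ ^ 2) ^ (α / 2) := by
  have hα2 : 0 ≤ α / 2 := by positivity
  refine ⟨(1/4) * (1/128) ^ (α/2), 2 ^ (α/2), by positivity, by positivity, ?_⟩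
  intro t ht ξ η
  set M : ℝ := 1 + ‖ξ‖ ^ 2 + t ^ 2 * ‖η‖ ^ 2 with hM
  have hM0 : 0 < M := by positivity
  have hcont : Continuous fun ρ : ℝ => (1 + ‖ξ + ρ • η‖ ^ 2) ^ (α / 2) := by
    apply Continuous.rpow_const
    · fun_prop
    · exact fun _ => Or.inr hα2
  have hint : ∀ a b : ℝ,
      IntervalIntegrable (fun ρ : ℝ => (1 + ‖ξ + ρ • η‖ ^ 2) ^ (α / 2)) volume a b :=
    fun a b => hcont.intervalIntegrable a b
  have hnn : ∀ ρ : ℝ, 0 ≤ (1 + ‖ξ + ρ • η‖ ^ 2) ^ (α / 2) := fun ρ => by positivity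
  -- lower-bound helper: integral over [0,t] dominates (b-a) * bound on [a,b]
  have hlow : ∀ a b : ℝ, 0 ≤ a → a ≤ b → b ≤ t →
      (∀ ρ ∈ Set.Icc a b, (M/128) ^ (α/2) ≤ (1 + ‖ξ + ρ • η‖ ^ 2) ^ (α / 2)) →
      (b - a) * (M/128) ^ (α/2) ≤ ∫ ρ in (0:ℝ)..t, (1 + ‖ξ + ρ • η‖ ^ 2) ^ (α / 2) := by
    intro a b ha hab hbt hbound
    have e1 : (∫ ρ in (0:ℝ)..a, (1 + ‖ξ + ρ • η‖ ^ 2) ^ (α / 2))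
        + (∫ ρ in a..b, (1 + ‖ξ + ρ • η‖ ^ 2) ^ (α / 2))
        = ∫ ρ in (0:ℝ)..b, (1 + ‖ξ + ρ • η‖ ^ 2) ^ (α / 2) :=
      intervalIntegral.integral_add_adjacent_intervals (hint 0 a) (hint a b)
    have e2 : (∫ ρ in (0:ℝ)..b, (1 + ‖ξ + ρ • η‖ ^ 2) ^ (α / 2))
        + (∫ ρ in b..t, (1 + ‖ξ + ρ • η‖ ^ 2) ^ (α / 2))
        = ∫ ρ in (0:ℝ)..t, (1 + ‖ξ + ρ • η‖ ^ 2) ^ (α / 2) :=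
      intervalIntegral.integral_add_adjacent_intervals (hint 0 b) (hint b t)
    have n1 : 0 ≤ ∫ ρ in (0:ℝ)..a, (1 + ‖ξ + ρ • η‖ ^ 2) ^ (α / 2) :=
      intervalIntegral.integral_nonneg ha (fun u _ => hnn u)
    have n2 : 0 ≤ ∫ ρ in b..t, (1 + ‖ξ + ρ • η‖ ^ 2) ^ (α / 2) :=
      intervalIntegral.integral_nonneg hbt (fun u _ => hnn u)
    have mid : (b - a) * (M/128) ^ (α/2) ≤ ∫ ρ in a..b, (1 + ‖ξ + ρ • η‖ ^ 2) ^ (α / 2) := by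
      have := intervalIntegral.integral_mono_on hab
        (intervalIntegrable_const (c := (M/128) ^ (α/2))) (hint a b) hbound
      simpa [smul_eq_mul, mul_comm] using this
    linarith
  constructor
  · -- LOWER BOUND
    have heq : (1/4 : ℝ) * (1/128) ^ (α/2) * t * M ^ (α/2) = (t/4) * (M/128) ^ (α/2) := by
      rw [show M / 128 = (1/128) * M by ring, Real.mul_rpow (by norm_num) hM0.le]
      ring
    rw [heq]
    -- pointwise criterion
    have hpt : ∀ ρ : ℝ, M / 128 ≤ 1 + ‖ξ + ρ • η‖ ^ 2 →
        (M/128) ^ (α/2) ≤ (1 + ‖ξ + ρ • η‖ ^ 2) ^ (α / 2) :=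
      fun ρ h => Real.rpow_le_rpow (by positivity) h hα2
    by_cases hbig : t * ‖η‖ ≤ ‖ξ‖
    · -- Case A: ξ dominates; use [0, t/2]
      have key := hlow 0 (t/2) le_rfl (by linarith) (by linarith) ?_
      · have hm : (0:ℝ) ≤ (M/128) ^ (α/2) := by positivity
        nlinarith
      · intro ρ hρ
        apply hpt
        have h1 : ‖ξ‖ - ‖ρ • η‖ ≤ ‖ξ + ρ • η‖ := by
          have := norm_sub_norm_le ξ (-(ρ • η))
          simpa [sub_neg_eq_add] using this
        have h2 : ‖ρ • η‖ = ρ * ‖η‖ := by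
          rw [norm_smul, Real.norm_eq_abs, abs_of_nonneg hρ.1]
        rw [h2] at h1
        have h3 : ρ * ‖η‖ ≤ (t/2) * ‖η‖ :=
          mul_le_mul_of_nonneg_right hρ.2 (norm_nonneg η)
        have h4 : ‖ξ‖ / 2 ≤ ‖ξ + ρ • η‖ := by nlinarith
        have h5 : (0:ℝ) ≤ ‖ξ + ρ • η‖ := norm_nonneg _
        have h6 : t ^ 2 * ‖η‖ ^ 2 ≤ ‖ξ‖ ^ 2 := by
          nlinarith [mul_self_le_mul_self (show (0:ℝ) ≤ t * ‖η‖ by positivity) hbig]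
        rw [hM]
        nlinarith [mul_self_le_mul_self (show (0:ℝ) ≤ ‖ξ‖ / 2 by positivity) h4]
    · -- Case B: η dominates
      push_neg at hbig
      have hMle : M ≤ 1 + 2 * t ^ 2 * ‖η‖ ^ 2 := by
        rw [hM]; nlinarith [norm_nonneg ξ, norm_nonneg η]
      have hpt2 : ∀ ρ : ℝ, t * ‖η‖ / 8 ≤ ‖ξ + ρ • η‖ →
          (M/128) ^ (α/2) ≤ (1 + ‖ξ + ρ • η‖ ^ 2) ^ (α / 2) := by
        intro ρ h
        apply hpt
        have h5 : (0:ℝ) ≤ ‖ξ + ρ • η‖ := norm_nonneg _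
        nlinarith [mul_self_le_mul_self (show (0:ℝ) ≤ t * ‖η‖ / 8 by positivity) h]
      by_cases hfirst : ∀ ρ ∈ Set.Icc (0:ℝ) (t/4), t * ‖η‖ / 8 ≤ ‖ξ + ρ • η‖
      · have key := hlow 0 (t/4) le_rfl (by linarith) (by linarith)
          (fun ρ hρ => hpt2 ρ (hfirst ρ hρ))
        have hm : (0:ℝ) ≤ (M/128) ^ (α/2) := by positivity
        nlinarith
      · push_neg at hfirst
        obtain ⟨ρ₁, hρ₁, hρ₁small⟩ := hfirst
        have key := hlow (3*t/4) t (by linarith) (by linarith) le_rfl ?_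
        · have hm : (0:ℝ) ≤ (M/128) ^ (α/2) := by positivity
          nlinarith
        · intro ρ hρ
          apply hpt2
          have hdiff : (ξ + ρ • η) - (ξ + ρ₁ • η) = (ρ - ρ₁) • η := by
            rw [sub_smul]; abel
          have h1 : ‖(ρ - ρ₁) • η‖ ≤ ‖ξ + ρ • η‖ + ‖ξ + ρ₁ • η‖ := by
            rw [← hdiff]; exact norm_sub_le _ _
          have h2 : ‖(ρ - ρ₁) • η‖ = (ρ - ρ₁) * ‖η‖ := by
            rw [norm_smul, Real.norm_eq_abs, abs_of_nonneg (by linarith [hρ.1, hρ₁.2])]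
          rw [h2] at h1
          have h3 : (t/2) * ‖η‖ ≤ (ρ - ρ₁) * ‖η‖ :=
            mul_le_mul_of_nonneg_right (by linarith [hρ.1, hρ₁.2]) (norm_nonneg η)
          linarith [norm_nonneg ξ]
  · -- UPPER BOUND
    have hb : ∀ ρ ∈ Set.Icc (0:ℝ) t,
        (1 + ‖ξ + ρ • η‖ ^ 2) ^ (α / 2) ≤ (2 * M) ^ (α/2) := by
      intro ρ hρ
      apply Real.rpow_le_rpow (by positivity) ?_ hα2
      have h1 : ‖ξ + ρ • η‖ ≤ ‖ξ‖ + ρ * ‖η‖ := by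
        calc ‖ξ + ρ • η‖ ≤ ‖ξ‖ + ‖ρ • η‖ := norm_add_le _ _
        _ = ‖ξ‖ + ρ * ‖η‖ := by
            rw [norm_smul, Real.norm_eq_abs, abs_of_nonneg hρ.1]
      have h5 : (0:ℝ) ≤ ‖ξ + ρ • η‖ := norm_nonneg _
      have h3 : ρ * ‖η‖ ≤ t * ‖η‖ := mul_le_mul_of_nonneg_right hρ.2 (norm_nonneg η)
      rw [hM]
      nlinarith [mul_self_le_mul_self h5 h1,
        mul_self_le_mul_self (show (0:ℝ) ≤ ρ * ‖η‖ from mul_nonneg hρ.1 (norm_nonneg η)) h3,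
        sq_nonneg (‖ξ‖ - ρ * ‖η‖)]
    have hmain := intervalIntegral.integral_mono_on ht.le (hint 0 t)
      (intervalIntegrable_const (c := (2*M) ^ (α/2))) hb
    have heq : (2:ℝ) ^ (α/2) * t * M ^ (α/2) = (t - 0) * (2*M) ^ (α/2) := by
      rw [Real.mul_rpow (by norm_num) hM0.le]; ring
    rw [heq]
    simpa [smul_eq_mul, mul_comm] using hmain
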